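/- arXiv:2404.16430 — 4 statements merged into one kernel-verified Lean document; each statement's English description precedes it below -/
import Mathlib

section
/- Let G=(V,E) be an undirected graph and S = {0, 1, a0, a1, a2}. Define F : S^V → S^V by: F(c)(v) = 1-i if c(v) = i ∈ {0,1}; if c(v) = a_i then F(c)(v) = 0 when some neighbor of v has state in {0,1}, and F(c)(v) = a_{(i+1) mod 3} otherwise. Then G is connected if and only if F has no periodic orbit of minimal period 6, i.e., there is no configuration c with F^6(c) = c and F^j(c) ≠ c for all 1 ≤ j ≤ 5. -/
/-!
Call a configuration *separated* if no vertex in an `a`-state has a neighbour in a state of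
`{0, 1}`. On a separated configuration the neighbours are irrelevant: every vertex just applies
the permutation `0 ↔ 1`, `a0 → a1 → a2 → a0`, which preserves being separated. A periodic
configuration is separated, because states in `{0, 1}` are never left again. On a connected graph a
separated configuration lives entirely in `{0, 1}` (period dividing 2) or entirely among the
`a`-states (period dividing 3), so period 6 is impossible. On a disconnected graph, putting `0` on
one component and `a0` on the rest gives a separated configuration of minimal period `lcm 2 3 = 6`.
-/

attribute [local instance] Classical.propDecidable

inductive St : Type where
  | z0 | z1 | a0 | a1 | a2
  deriving DecidableEq

noncomputable def caF {V : Type*} (G : SimpleGraph V) (c : V → St) : V → St :=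
  fun v =>
    match c v with
    | .z0 => .z1
    | .z1 => .z0
    | .a0 => if ∃ w, G.Adj v w ∧ (c w = .z0 ∨ c w = .z1) then .z0 else .a1
    | .a1 => if ∃ w, G.Adj v w ∧ (c w = .z0 ∨ c w = .z1) then .z0 else .a2
    | .a2 => if ∃ w, G.Adj v w ∧ (c w = .z0 ∨ c w = .z1) then .z0 else .a0

namespace St

def IsZ (s : St) : Prop := s = z0 ∨ s = z1

def step : St → St
  | z0 => z1
  | z1 => z0
  | a0 => a1
  | a1 => a2
  | a2 => a0

theorem isZ_step_iff {s : St} : (step s).IsZ ↔ s.IsZ := by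
  cases s <;> simp [step, IsZ]

theorem iterate_step_two_of_isZ {s : St} (hs : s.IsZ) : step^[2] s = s := by
  rcases hs with rfl | rfl <;> rfl

theorem iterate_step_three_of_not_isZ {s : St} (hs : ¬ s.IsZ) : step^[3] s = s := by
  cases s <;> simp_all [IsZ] <;> rfl

theorem iterate_step_six : step^[6] = id := by
  funext s
  cases s <;> rfl

theorem iterate_step_z0_ne_or_a0_ne {j : ℕ} (hj1 : 1 ≤ j) (hj5 : j ≤ 5) :
    step^[j] z0 ≠ z0 ∨ step^[j] a0 ≠ a0 := by
  interval_cases j <;> decide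

end St

section Dynamics

variable {V : Type*} {G : SimpleGraph V} {c : V → St}

theorem isZ_caF_of_isZ {v : V} (hv : (c v).IsZ) : (caF G c v).IsZ := by
  rcases hv with hv | hv <;> simp [caF, St.IsZ, hv]

theorem isZ_iterate_caF_of_isZ {v : V} (hv : (c v).IsZ) (k : ℕ) : ((caF G)^[k] c v).IsZ := by
  induction k with
  | zero => exact hv
  | succ k ih =>
    rw [Function.iterate_succ_apply']
    exact isZ_caF_of_isZ ih

theorem isZ_caF_of_adj {v w : V} (hvw : G.Adj v w) (hw : (c w).IsZ) : (caF G c v).IsZ := by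
  have hex : ∃ w, G.Adj v w ∧ (c w = .z0 ∨ c w = .z1) := ⟨w, hvw, hw⟩
  cases hv : c v <;> simp [caF, St.IsZ, hv, hex]

variable (G) in
def IsSeparated (c : V → St) : Prop :=
  ∀ ⦃v w⦄, G.Adj v w → (c w).IsZ → (c v).IsZ

theorem IsSeparated.isZ_of_reachable (hc : IsSeparated G c) {v w : V} (hvw : G.Reachable v w)
    (hw : (c w).IsZ) : (c v).IsZ := by
  obtain ⟨p⟩ := hvw
  induction p with
  | nil => exact hw
  | cons hadj _ ih => exact hc hadj (ih hw)

theorem IsSeparated.comp_step (hc : IsSeparated G c) : IsSeparated G (St.step ∘ c) :=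
  fun _ _ hvw hw => St.isZ_step_iff.2 (hc hvw (St.isZ_step_iff.1 hw))

theorem IsSeparated.caF_eq (hc : IsSeparated G c) : caF G c = St.step ∘ c := by
  funext v
  have hnone : ¬ (c v).IsZ → ¬ ∃ w, G.Adj v w ∧ (c w = .z0 ∨ c w = .z1) :=
    fun hv ⟨_, hvw, hw⟩ => hv (hc hvw hw)
  cases hv : c v <;> simp_all [caF, St.step, St.IsZ]

theorem IsSeparated.iterate_caF_eq (hc : IsSeparated G c) (k : ℕ) :
    (caF G)^[k] c = St.step^[k] ∘ c := by
  induction k generalizing c with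
  | zero => rfl
  | succ k ih =>
    rw [Function.iterate_succ_apply, hc.caF_eq, ih hc.comp_step, Function.iterate_succ,
      Function.comp_assoc]

theorem isSeparated_of_isPeriodicPt {n : ℕ} (hn : 0 < n)
    (hc : Function.IsPeriodicPt (caF G) n c) : IsSeparated G c := by
  intro v w hvw hw
  obtain ⟨k, rfl⟩ := Nat.exists_eq_succ_of_ne_zero hn.ne'
  have hZ := isZ_iterate_caF_of_isZ (G := G) (isZ_caF_of_adj hvw hw) k
  rwa [← Function.iterate_succ_apply, hc.eq] at hZ

end Dynamics

theorem stmt1 {V : Type*} [Nonempty V] (G : SimpleGraph V) :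
    G.Connected ↔
      ¬ ∃ c : V → St, (caF G)^[6] c = c ∧ ∀ j, 1 ≤ j → j ≤ 5 → (caF G)^[j] c ≠ c := by
  constructor
  · rintro hG ⟨c, h6, hj⟩
    have hc : IsSeparated G c := isSeparated_of_isPeriodicPt (by norm_num) h6
    by_cases hz : ∀ v, (c v).IsZ
    · refine hj 2 (by norm_num) (by norm_num) ?_
      rw [hc.iterate_caF_eq]
      exact funext fun v => St.iterate_step_two_of_isZ (hz v)
    · obtain ⟨v, hv⟩ := not_forall.1 hz
      refine hj 3 (by norm_num) (by norm_num) ?_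
      rw [hc.iterate_caF_eq]
      exact funext fun w => St.iterate_step_three_of_not_isZ
        fun hw => hv (hc.isZ_of_reachable (hG v w) hw)
  · intro hno
    by_contra hG
    obtain ⟨u, v, huv⟩ : ∃ u v, ¬ G.Reachable u v := by
      simpa [SimpleGraph.Preconnected] using fun h => hG ⟨h⟩
    let c : V → St := fun w => if G.Reachable u w then .z0 else .a0
    have hc : IsSeparated G c := fun x y hxy hy => by
      have huy : G.Reachable u y := by by_contra h; simp [c, h, St.IsZ] at hy
      simp [c, huy.trans hxy.symm.reachable, St.IsZ]
    refine hno ⟨c, by rw [hc.iterate_caF_eq, St.iterate_step_six]; rfl, fun j hj1 hj5 hj => ?_⟩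
    rw [hc.iterate_caF_eq] at hj
    rcases St.iterate_step_z0_ne_or_a0_ne hj1 hj5 with h | h
    · exact h (by simpa [c] using congrFun hj u)
    · exact h (by simpa [c, huv] using congrFun hj v)
end

section
/- With F as in the connectivity automaton (states S = {0,1,a0,a1,a2}, F(c)(v) = 1-i for c(v)=i∈{0,1}; F(c)(v)=0 if c(v)=a_i and v has a neighbor with state in {0,1}; F(c)(v)=a_{(i+1) mod 3} otherwise): if G is disconnected (has at least two connected components, each nonempty), then the configuration c equal to a0 on one fixed component and 0 on all other vertices satisfies F^6(c) = c and F^j(c) ≠ c for 1 ≤ j ≤ 5. -/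
attribute [local instance] Classical.propDecidable

/-!
On a union `S` of connected components the states `a_i` never see a neighbour in `{0, 1}`,
so they cycle with period 3, while outside `S` the states `0, 1` alternate with period 2.
Starting from `a0` on `S` and `0` elsewhere, the `k`-th configuration is therefore
`a_(k mod 3)` on `S` and `k mod 2` off `S`; it returns to the start exactly when `2 ∣ k`
(seen at a vertex outside `S`) and `3 ∣ k` (seen at a vertex of `S`).
-/

def St.binary (k : ℕ) : St := if k % 2 = 0 then .z0 else .z1

def St.cyclic (k : ℕ) : St := if k % 3 = 0 then .a0 else if k % 3 = 1 then .a1 else .a2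

namespace St

lemma binary_eq_z0_iff {k : ℕ} : binary k = .z0 ↔ 2 ∣ k := by
  unfold binary; split_ifs <;> simp [Nat.dvd_iff_mod_eq_zero, *]

lemma cyclic_eq_a0_iff {k : ℕ} : cyclic k = .a0 ↔ 3 ∣ k := by
  unfold cyclic; split_ifs <;> simp [Nat.dvd_iff_mod_eq_zero, *]

lemma cyclic_ne_z0 (k : ℕ) : cyclic k ≠ .z0 := by
  unfold cyclic; split_ifs <;> simp

lemma cyclic_ne_z1 (k : ℕ) : cyclic k ≠ .z1 := by
  unfold cyclic; split_ifs <;> simp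

end St

section

variable {V : Type*} {G : SimpleGraph V} {S : Set V} {c : V → St} {v : V} {k : ℕ}

lemma caF_apply_of_eq_binary (h : c v = St.binary k) : caF G c v = St.binary (k + 1) := by
  unfold caF St.binary at *
  rw [h]
  rcases Nat.mod_two_eq_zero_or_one k with hk | hk <;>
    simp [hk, Nat.succ_mod_two_eq_zero_iff]

lemma caF_apply_of_eq_cyclic (h : c v = St.cyclic k)
    (hnbr : ∀ w, G.Adj v w → c w ≠ .z0 ∧ c w ≠ .z1) : caF G c v = St.cyclic (k + 1) := by
  have hquiet : ¬ ∃ w, G.Adj v w ∧ (c w = .z0 ∨ c w = .z1) := by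
    rintro ⟨w, hvw, hw | hw⟩
    exacts [(hnbr w hvw).1 hw, (hnbr w hvw).2 hw]
  unfold caF St.cyclic at *
  rw [h]
  have : (k + 1) % 3 = (k % 3 + 1) % 3 := by omega
  have : k % 3 < 3 := Nat.mod_lt _ (by norm_num)
  interval_cases hk : k % 3 <;> simp [*]


noncomputable def orbitConfig (S : Set V) (k : ℕ) : V → St :=
  fun v => if v ∈ S then St.cyclic k else St.binary k

lemma caF_orbitConfig (hS : ∀ v w, G.Adj v w → v ∈ S → w ∈ S) :
    caF G (orbitConfig S k) = orbitConfig S (k + 1) := by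
  funext v
  by_cases hv : v ∈ S
  · rw [show orbitConfig S (k + 1) v = St.cyclic (k + 1) from if_pos hv]
    refine caF_apply_of_eq_cyclic (if_pos hv) fun w hvw => ?_
    rw [orbitConfig, if_pos (hS v w hvw hv)]
    exact ⟨St.cyclic_ne_z0 k, St.cyclic_ne_z1 k⟩
  · rw [show orbitConfig S (k + 1) v = St.binary (k + 1) from if_neg hv]
    exact caF_apply_of_eq_binary (if_neg hv)

lemma iterate_caF_orbitConfig (hS : ∀ v w, G.Adj v w → v ∈ S → w ∈ S) (k : ℕ) :
    (caF G)^[k] (orbitConfig S 0) = orbitConfig S k := by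
  induction k with
  | zero => rfl
  | succ k ih => rw [Function.iterate_succ_apply', ih, caF_orbitConfig hS]

lemma orbitConfig_eq_zero_iff {u : V} (hv : v ∈ S) (hu : u ∉ S) :
    orbitConfig S k = orbitConfig S 0 ↔ 6 ∣ k := by
  constructor
  · intro h
    have h3 : St.cyclic k = St.cyclic 0 := by simpa [orbitConfig, hv] using congrFun h v
    have h2 : St.binary k = St.binary 0 := by simpa [orbitConfig, hu] using congrFun h u
    rw [show St.cyclic 0 = .a0 from rfl, St.cyclic_eq_a0_iff] at h3
    rw [show St.binary 0 = .z0 from rfl, St.binary_eq_z0_iff] at h2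
    omega
  · intro hk
    have h3 : St.cyclic k = St.cyclic 0 := St.cyclic_eq_a0_iff.2 (dvd_trans ⟨2, rfl⟩ hk)
    have h2 : St.binary k = St.binary 0 := St.binary_eq_z0_iff.2 (dvd_trans ⟨3, rfl⟩ hk)
    funext w
    simp only [orbitConfig, h3, h2]

end

theorem stmt2 {V : Type*} (G : SimpleGraph V) (v0 : V)
    (hdis : ∃ u, ¬ G.Reachable v0 u)
    (c : V → St)
    (hc : ∀ v, c v = if G.Reachable v0 v then St.a0 else St.z0) :
    (caF G)^[6] c = c ∧ ∀ j, 1 ≤ j → j ≤ 5 → (caF G)^[j] c ≠ c := by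
  obtain ⟨u, hu⟩ := hdis
  set S : Set V := {w | G.Reachable v0 w}
  have hS : ∀ v w, G.Adj v w → v ∈ S → w ∈ S := fun _ _ hvw hv => hv.trans hvw.reachable
  have hc0 : c = orbitConfig S 0 := funext fun v => (hc v).trans rfl
  have hperiod (k : ℕ) : (caF G)^[k] c = c ↔ 6 ∣ k := by
    rw [hc0, iterate_caF_orbitConfig hS]
    exact orbitConfig_eq_zero_iff (S := S) (SimpleGraph.Reachable.refl v0) hu
  refine ⟨(hperiod 6).2 dvd_rfl, fun j hj1 hj5 hj => ?_⟩
  have := Nat.le_of_dvd (by omega) ((hperiod j).1 hj)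
  omega
end

section
/- Fix a finite set S, s_0 ∈ S, and a domino specification D over S for the labeled graph structure. Extend the alphabet to S' = S ∪ {t, e_0, e_1} (new symbols) and define f' by: states e_i map to e_{1-i}; state t maps to s_0; a state s ∈ S maps to itself if all its δ-neighbors s' satisfy (ρ(s), ρ(s')) ∈ D_δ (where ρ sends t to s_0 and fixes S, and the condition for vertices in state t uses ρ similarly), and to e_0 otherwise. Then: (1) the fixed points of F_{G,f'} are exactly the D-valid configurations over S; and (2) a fixed point c has a preimage c' ≠ c under F_{G,f'} if and only if c contains an occurrence of s_0, and any such preimage c' differs from c exactly on a nonempty set of vertices where c is s_0 and c' is t. -/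
attribute [local instance] Classical.propDecidable

/-- The alphabet `S` extended by a duplicate marker `t` and two error states. -/
inductive CAExt (S : Type*) : Type _ where
  | base : S → CAExt S
  | t : CAExt S
  | e0 : CAExt S
  | e1 : CAExt S

/-- The projection `ρ` sending `t` to `s0` and fixing `S` (its value on error
states is irrelevant). -/
def rho {S : Type*} (s0 : S) : CAExt S → S
  | .base s => s
  | _ => s0

def isErr {S : Type*} (x : CAExt S) : Prop := x = CAExt.e0 ∨ x = CAExt.e1

/-!
A configuration without error states evolves in one step to `base ∘ ρ`, provided `ρ ∘ c` is
D-valid: every check passes and `t` is rewritten to `s₀`. Conversely, the map can only produce a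
state of `S` at `v` when `c v` is not an error, `ρ (c v)` is that state and all checks at `v`
pass. Since `t` and the error states never survive a step unchanged, a fixed point is a D-valid
configuration over `S`, and a preimage of it can differ from it only by replacing some `s₀` by
`t`; replacing every `s₀` by `t` is such a preimage.
-/

namespace CAExt

variable {V D S : Type*}

def NeighborsOk (E : D → V → V → Prop) (Dom : D → S → S → Prop) (s0 : S)
    (c : V → CAExt S) (v : V) (s : S) : Prop :=
  ∀ δ v', E δ v v' → ¬ isErr (c v') ∧ Dom δ s (rho s0 (c v'))

/-- The global map `F_{G,f'}` of the checking rule `f'`. -/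
noncomputable def step (E : D → V → V → Prop) (Dom : D → S → S → Prop) (s0 : S)
    (c : V → CAExt S) (v : V) : CAExt S :=
  match c v with
  | .base s => if NeighborsOk E Dom s0 c v s then .base s else .e0
  | .t => if NeighborsOk E Dom s0 c v s0 then .base s0 else .e0
  | .e0 => .e1
  | .e1 => .e0

def IsValid (E : D → V → V → Prop) (Dom : D → S → S → Prop) (d : V → S) : Prop :=
  ∀ δ v v', E δ v v' → Dom δ (d v) (d v')

variable {E : D → V → V → Prop} {Dom : D → S → S → Prop} {s0 : S}

theorem exists_eq_base_or_eq_t_of_not_isErr {x : CAExt S} (hx : ¬ isErr x) :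
    (∃ s, x = .base s) ∨ x = .t := by
  cases x <;> simp_all [isErr]

theorem step_of_not_isErr {c : V → CAExt S} {v : V} (hv : ¬ isErr (c v)) :
    step E Dom s0 c v =
      if NeighborsOk E Dom s0 c v (rho s0 (c v)) then .base (rho s0 (c v)) else .e0 := by
  rcases exists_eq_base_or_eq_t_of_not_isErr hv with ⟨s, h⟩ | h <;> simp [step, h, rho]

theorem step_eq_base_iff {c : V → CAExt S} {v : V} {s : S} :
    step E Dom s0 c v = .base s ↔
      ¬ isErr (c v) ∧ rho s0 (c v) = s ∧ NeighborsOk E Dom s0 c v s := by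
  by_cases hv : isErr (c v)
  · rcases hv with h | h <;> simp [step, h, isErr]
  · rw [step_of_not_isErr hv]
    split_ifs with hok
    · simp only [base.injEq, hv, not_false_eq_true, true_and]
      exact ⟨fun h => ⟨h, h ▸ hok⟩, And.left⟩
    · simp only [false_iff, not_and]
      exact fun _ h => h ▸ hok

theorem step_ne_self_of_not_base {c : V → CAExt S} {v : V} (hv : ∀ s, c v ≠ .base s) :
    step E Dom s0 c v ≠ c v := by
  by_cases herr : isErr (c v)
  · rcases herr with h | h <;> simp [step, h]
  · have ht : c v = .t :=
      (exists_eq_base_or_eq_t_of_not_isErr herr).resolve_left fun ⟨s, hs⟩ => hv s hs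
    simp only [step, ht]
    split_ifs <;> simp

theorem step_eq_of_isValid {c : V → CAExt S} (herr : ∀ v, ¬ isErr (c v))
    (hvalid : IsValid E Dom (rho s0 ∘ c)) :
    step E Dom s0 c = fun v => .base (rho s0 (c v)) := by
  funext v
  exact step_eq_base_iff.2 ⟨herr v, rfl, fun δ v' hE => ⟨herr v', hvalid δ v v' hE⟩⟩

theorem step_eq_self_iff (c : V → CAExt S) :
    step E Dom s0 c = c ↔ ∃ d : V → S, (∀ v, c v = .base (d v)) ∧ IsValid E Dom d := by
  constructor
  · intro hfix
    have hbase : ∀ v, c v = .base (rho s0 (c v)) := fun v => by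
      by_contra hne
      refine step_ne_self_of_not_base (fun s hs => ?_) (congrFun hfix v)
      simp [hs, rho] at hne
    refine ⟨rho s0 ∘ c, hbase, fun δ v v' hE => ?_⟩
    have hok := (step_eq_base_iff.1 ((congrFun hfix v).trans (hbase v))).2.2
    exact (hok δ v' hE).2
  · rintro ⟨d, hc, hvalid⟩
    have hρ : rho s0 ∘ c = d := funext fun v => by simp [hc v, rho]
    have herr : ∀ v, ¬ isErr (c v) := fun v => by simp [hc v, isErr]
    rw [step_eq_of_isValid herr (hρ ▸ hvalid)]
    exact funext fun v => (hρ ▸ hc v).symm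

theorem eq_t_of_step_eq_of_ne {c c' : V → CAExt S} {d : V → S} (hc : ∀ v, c v = .base (d v))
    (hpre : step E Dom s0 c' = c) {v : V} (hne : c' v ≠ c v) :
    c v = .base s0 ∧ c' v = .t := by
  obtain ⟨herr, hρ, -⟩ := step_eq_base_iff.1 ((congrFun hpre v).trans (hc v))
  rcases exists_eq_base_or_eq_t_of_not_isErr herr with ⟨s, h⟩ | h
  · rw [h] at hρ hne
    exact absurd (hρ ▸ hc v).symm hne
  · rw [h] at hρ
    exact ⟨by rw [hc v, ← hρ]; rfl, h⟩

theorem exists_ne_step_eq_of_eq_s0 {d : V → S} (hvalid : IsValid E Dom d) {v₀ : V}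
    (hv₀ : d v₀ = s0) :
    ∃ c', c' ≠ (fun v => .base (d v)) ∧ step E Dom s0 c' = fun v => .base (d v) := by
  set c' : V → CAExt S := fun v => if d v = s0 then .t else .base (d v)
  have hρ : rho s0 ∘ c' = d := funext fun v => by
    by_cases h : d v = s0 <;> simp [c', h, rho]
  have herr : ∀ v, ¬ isErr (c' v) := fun v => by
    by_cases h : d v = s0 <;> simp [c', h, isErr]
  refine ⟨c', fun h => ?_, ?_⟩
  · simpa [c', hv₀] using congrFun h v₀
  · rw [step_eq_of_isValid herr (hρ ▸ hvalid), ← hρ]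
    rfl

end CAExt

open CAExt in
theorem stmt12 {V D S : Type*} (E : D → V → V → Prop)
    (Dom : D → S → S → Prop) (s0 : S)
    (F : (V → CAExt S) → V → CAExt S)
    (hF : ∀ (c : V → CAExt S) (v : V),
      F c v =
        match c v with
        | .e0 => .e1
        | .e1 => .e0
        | s =>
          if ∀ δ v', E δ v v' → ¬ isErr (c v') ∧ Dom δ (rho s0 s) (rho s0 (c v'))
          then (if s = CAExt.t then CAExt.base s0 else s)
          else CAExt.e0) :
    -- (1) fixed points are exactly the D-valid configurations over S
    (∀ c : V → CAExt S, F c = c ↔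
      ∃ d : V → S, (∀ v, c v = CAExt.base (d v)) ∧
        ∀ (δ : D) (v v' : V), E δ v v' → Dom δ (d v) (d v')) ∧
    -- (2) a fixed point has a preimage other than itself iff it contains s0,
    -- and any such preimage differs from it exactly on a nonempty set of
    -- vertices where the fixed point is s0 and the preimage is t
    (∀ (c : V → CAExt S) (d : V → S), (∀ v, c v = CAExt.base (d v)) →
      (∀ (δ : D) (v v' : V), E δ v v' → Dom δ (d v) (d v')) →
      ((∃ c', c' ≠ c ∧ F c' = c) ↔ ∃ v, d v = s0) ∧
      (∀ c', F c' = c → c' ≠ c →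
        {v | c' v ≠ c v}.Nonempty ∧
        ∀ v, c' v ≠ c v → c v = CAExt.base s0 ∧ c' v = CAExt.t)) := by
  obtain rfl : F = step E Dom s0 := by
    funext c v
    rw [hF]
    -- `congr` closes goals that differ only in the `Decidable` instances of the conditions
    cases h : c v <;> simp [step, h, rho] <;> congr
  refine ⟨step_eq_self_iff, fun c d hc hvalid => ⟨⟨?_, ?_⟩, ?_⟩⟩
  · rintro ⟨c', hne, hpre⟩
    obtain ⟨v, hv⟩ := Function.ne_iff.mp hne
    exact ⟨v, base.inj ((hc v).symm.trans (eq_t_of_step_eq_of_ne hc hpre hv).1)⟩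
  · rintro ⟨v₀, hv₀⟩
    obtain rfl : c = fun v => .base (d v) := funext hc
    exact exists_ne_step_eq_of_eq_s0 hvalid hv₀
  · exact fun c' hpre hne =>
      ⟨Function.ne_iff.mp hne, fun v hv => eq_t_of_step_eq_of_ne hc hpre hv⟩
end

section
/- Let G be a connected, locally finite infinite graph and X an infinite set of vertices of G. Then there exists an infinite walk v_0, v_1, v_2, … in G that visits every vertex of G at most 2 times and visits infinitely many distinct elements of X. -/
/-!
Fix a breadth-first spanning tree rooted at some vertex `r`. Since the tree is locally
finite, König's argument yields a ray `y₀ y₁ y₂ …` down the tree all of whose subtrees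
`T(y k)` contain infinitely many points of `X`; as depths along the ray are unbounded,
infinitely many of the disjoint pieces `T(y k) \ T(y (k+1))` meet `X`. The tree path from
`y k` to a point of `X` in its piece is a tooth of a comb with spine `y`. Walking along the
spine and going down and back up every tooth passes each vertex at most twice and reaches
infinitely many points of `X`.
-/

open Function

namespace SimpleGraph

variable {V : Type*} (G : SimpleGraph V) (r : V)

open Classical in
noncomputable def bfsParent (v : V) : V :=
  if h : ∃ u, G.Adj u v ∧ G.dist r u + 1 = G.dist r v then h.choose else v

def bfsSubtree (u : V) : Set V := {w | ∃ k, (G.bfsParent r)^[k] w = u}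

variable {G r}

lemma Connected.exists_adj_dist_add_one (hconn : G.Connected) {v : V} (hv : v ≠ r) :
    ∃ u, G.Adj u v ∧ G.dist r u + 1 = G.dist r v := by
  obtain ⟨p, hp⟩ := hconn.exists_walk_length_eq_dist v r
  cases p with
  | nil => exact absurd rfl hv
  | @cons _ u _ hadj q =>
    have hq : G.dist u r ≤ q.length := dist_le q
    have htri : G.dist v r ≤ G.dist v u + G.dist u r := hconn.dist_triangle
    rw [Walk.length_cons] at hp
    rw [dist_eq_one_iff_adj.mpr hadj] at htri
    refine ⟨u, hadj.symm, ?_⟩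
    rw [dist_comm (u := r), dist_comm (u := r)]
    omega

lemma bfsParent_self : G.bfsParent r r = r := by
  simp [bfsParent]

lemma Connected.adj_bfsParent (hconn : G.Connected) {v : V} (hv : v ≠ r) :
    G.Adj (G.bfsParent r v) v := by
  rw [bfsParent, dif_pos (hconn.exists_adj_dist_add_one hv)]
  exact (hconn.exists_adj_dist_add_one hv).choose_spec.1

lemma Connected.dist_bfsParent_add_one (hconn : G.Connected) {v : V} (hv : v ≠ r) :
    G.dist r (G.bfsParent r v) + 1 = G.dist r v := by
  rw [bfsParent, dif_pos (hconn.exists_adj_dist_add_one hv)]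
  exact (hconn.exists_adj_dist_add_one hv).choose_spec.2

lemma Connected.dist_iterate_bfsParent (hconn : G.Connected) (v : V) (k : ℕ) :
    G.dist r ((G.bfsParent r)^[k] v) = G.dist r v - k := by
  induction k with
  | zero => rfl
  | succ k ih =>
    rw [iterate_succ_apply']
    by_cases hr : (G.bfsParent r)^[k] v = r
    · rw [hr, bfsParent_self, dist_self]
      rw [hr, dist_self] at ih
      omega
    · have := hconn.dist_bfsParent_add_one hr
      omega

lemma mem_bfsSubtree_self (u : V) : u ∈ G.bfsSubtree r u := ⟨0, rfl⟩

lemma mem_bfsSubtree_iterate (w : V) (k : ℕ) : w ∈ G.bfsSubtree r ((G.bfsParent r)^[k] w) :=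
  ⟨k, rfl⟩

lemma bfsSubtree_subset {u u' : V} (h : u ∈ G.bfsSubtree r u') :
    G.bfsSubtree r u ⊆ G.bfsSubtree r u' := by
  rintro w ⟨k, rfl⟩
  obtain ⟨l, hl⟩ := h
  exact ⟨l + k, by rw [iterate_add_apply, hl]⟩

lemma Connected.mem_bfsSubtree_root (hconn : G.Connected) (w : V) : w ∈ G.bfsSubtree r r :=
  ⟨G.dist r w, (hconn.dist_eq_zero_iff.mp
    (by rw [hconn.dist_iterate_bfsParent, Nat.sub_self])).symm⟩

lemma Connected.dist_le_of_mem_bfsSubtree (hconn : G.Connected) {u w : V}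
    (hw : w ∈ G.bfsSubtree r u) : G.dist r u ≤ G.dist r w := by
  obtain ⟨k, rfl⟩ := hw
  rw [hconn.dist_iterate_bfsParent]
  exact Nat.sub_le _ _

lemma Connected.iterate_bfsParent_dist_sub (hconn : G.Connected) {u w : V}
    (hw : w ∈ G.bfsSubtree r u) : (G.bfsParent r)^[G.dist r w - G.dist r u] w = u := by
  obtain ⟨k, rfl⟩ := hw
  rw [hconn.dist_iterate_bfsParent]
  by_cases hk : k ≤ G.dist r w
  · rw [Nat.sub_sub_self hk]
  · -- beyond the depth of `w` the iteration is stuck at the root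
    have hroot : ∀ j, G.dist r w ≤ j → (G.bfsParent r)^[j] w = r := fun j hj =>
      (hconn.dist_eq_zero_iff.mp (by rw [hconn.dist_iterate_bfsParent]; omega)).symm
    rw [hroot k (by omega), hroot _ (by omega)]

lemma Connected.exists_child_mem_bfsSubtree (hconn : G.Connected) {u w : V}
    (hw : w ∈ G.bfsSubtree r u) (hne : w ≠ u) :
    ∃ c, c ≠ r ∧ G.bfsParent r c = u ∧ w ∈ G.bfsSubtree r c := by
  have hk := hconn.iterate_bfsParent_dist_sub hw
  have hlt : G.dist r u < G.dist r w := by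
    refine lt_of_le_of_ne (hconn.dist_le_of_mem_bfsSubtree hw) fun h => hne ?_
    rwa [h, Nat.sub_self, iterate_zero_apply] at hk
  refine ⟨(G.bfsParent r)^[G.dist r w - G.dist r u - 1] w, fun hc => ?_, ?_,
    mem_bfsSubtree_iterate w _⟩
  · have := hconn.dist_iterate_bfsParent (r := r) w (G.dist r w - G.dist r u - 1)
    rw [hc, dist_self] at this
    omega
  · rwa [← iterate_succ_apply' (G.bfsParent r), Nat.succ_eq_add_one,
      Nat.sub_add_cancel (by omega : 1 ≤ G.dist r w - G.dist r u)]

lemma Connected.exists_child_inter_bfsSubtree_infinite (hconn : G.Connected)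
    (hlf : ∀ v : V, Set.Finite {u | G.Adj v u}) {X : Set V} {u : V}
    (h : (X ∩ G.bfsSubtree r u).Infinite) :
    ∃ c, c ≠ r ∧ G.bfsParent r c = u ∧ (X ∩ G.bfsSubtree r c).Infinite := by
  set C := {c | c ≠ r ∧ G.bfsParent r c = u}
  have hC : C.Finite := (hlf u).subset fun c ⟨hc, hpc⟩ => hpc ▸ hconn.adj_bfsParent hc
  by_contra! hfin
  -- `T u` is `u` together with the subtrees of its finitely many children
  refine h (((hC.biUnion fun c hc => hfin c hc.1 hc.2).insert u).subset ?_)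
  rintro w ⟨hwX, hw⟩
  by_cases hwu : w = u
  · exact Or.inl hwu
  · obtain ⟨c, hc, hpc, hwc⟩ := hconn.exists_child_mem_bfsSubtree hw hwu
    exact Or.inr (Set.mem_biUnion (x := c) ⟨hc, hpc⟩ ⟨hwX, hwc⟩)

variable (G r) in
def IsBfsRay (y : ℕ → V) : Prop := ∀ k, y (k + 1) ≠ r ∧ G.bfsParent r (y (k + 1)) = y k

lemma Connected.exists_isBfsRay (hconn : G.Connected)
    (hlf : ∀ v : V, Set.Finite {u | G.Adj v u}) {X : Set V} (hX : X.Infinite) :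
    ∃ y, G.IsBfsRay r y ∧ ∀ k, (X ∩ G.bfsSubtree r (y k)).Infinite := by
  have hstep (u : {u // (X ∩ G.bfsSubtree r u).Infinite}) :
      ∃ c : {c // (X ∩ G.bfsSubtree r c).Infinite}, c.1 ≠ r ∧ G.bfsParent r c.1 = u.1 := by
    obtain ⟨c, hc, hpc, hinf⟩ := hconn.exists_child_inter_bfsSubtree_infinite hlf u.2
    exact ⟨⟨c, hinf⟩, hc, hpc⟩
  choose f hf using hstep
  have hroot : (X ∩ G.bfsSubtree r r).Infinite := by
    rwa [Set.inter_eq_left.mpr fun w _ => hconn.mem_bfsSubtree_root w]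
  refine ⟨fun k => (f^[k] ⟨r, hroot⟩).1, fun k => ?_, fun k => (f^[k] ⟨r, hroot⟩).2⟩
  simp only [iterate_succ_apply']
  exact hf _

namespace IsBfsRay

variable {y : ℕ → V}

lemma adj (hconn : G.Connected) (hy : G.IsBfsRay r y) (k : ℕ) : G.Adj (y k) (y (k + 1)) :=
  (hy k).2 ▸ hconn.adj_bfsParent (hy k).1

lemma dist_succ (hconn : G.Connected) (hy : G.IsBfsRay r y) (k : ℕ) :
    G.dist r (y (k + 1)) = G.dist r (y k) + 1 :=
  (hy k).2 ▸ (hconn.dist_bfsParent_add_one (hy k).1).symm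

lemma bfsSubtree_antitone (hy : G.IsBfsRay r y) : Antitone fun k => G.bfsSubtree r (y k) :=
  antitone_nat_of_succ_le fun k => bfsSubtree_subset ⟨1, (hy k).2⟩

lemma not_mem_bfsSubtree_succ (hconn : G.Connected) (hy : G.IsBfsRay r y) (k : ℕ) :
    y k ∉ G.bfsSubtree r (y (k + 1)) := fun h => by
  have := hconn.dist_le_of_mem_bfsSubtree h
  rw [hy.dist_succ hconn] at this
  omega

lemma exists_mem_diff (hconn : G.Connected) (hy : G.IsBfsRay r y) {x : V} {K : ℕ}
    (hx : x ∈ G.bfsSubtree r (y K)) :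
    ∃ k ≥ K, x ∈ G.bfsSubtree r (y k) \ G.bfsSubtree r (y (k + 1)) := by
  by_contra! h
  -- otherwise `x` lies below every `y k` with `k ≥ K`, whose depths are unbounded
  have hmem : ∀ n, x ∈ G.bfsSubtree r (y (K + n)) := fun n => by
    induction n with
    | zero => exact hx
    | succ n ih => exact not_not.mp fun hn => h (K + n) le_self_add ⟨ih, hn⟩
  have hdist : ∀ n, G.dist r (y K) + n = G.dist r (y (K + n)) := fun n => by
    induction n with
    | zero => rfl
    | succ n ih => rw [← add_assoc, ← add_assoc, hy.dist_succ hconn, ← ih]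
  have := hconn.dist_le_of_mem_bfsSubtree (hmem (G.dist r x + 1))
  rw [← hdist] at this
  omega

lemma disjoint_diff (hy : G.IsBfsRay r y) {k l : ℕ} (hkl : k ≠ l) :
    Disjoint (G.bfsSubtree r (y k) \ G.bfsSubtree r (y (k + 1)))
      (G.bfsSubtree r (y l) \ G.bfsSubtree r (y (l + 1))) := by
  wlog h : k < l generalizing k l
  · exact (this hkl.symm (by omega)).symm
  exact Set.disjoint_left.mpr fun w hk hl => hk.2 (hy.bfsSubtree_antitone h hl.1)

end IsBfsRay

lemma Connected.iterate_bfsParent_mem_diff (hconn : G.Connected) {x u u' : V}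
    (hx : x ∈ G.bfsSubtree r u \ G.bfsSubtree r u') {e : ℕ}
    (he : e ≤ G.dist r x - G.dist r u) :
    (G.bfsParent r)^[e] x ∈ G.bfsSubtree r u \ G.bfsSubtree r u' := by
  refine ⟨⟨G.dist r x - G.dist r u - e, ?_⟩, fun h => hx.2 (bfsSubtree_subset h ⟨e, rfl⟩)⟩
  rw [← iterate_add_apply, Nat.sub_add_cancel he, hconn.iterate_bfsParent_dist_sub hx.1]

/-- `a k e`, `e ≤ m k`, runs along the `k`-th tooth from its tip `a k 0` to the spine vertex
`a k (m k)`. -/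
structure IsComb (G : SimpleGraph V) (a : ℕ → ℕ → V) (m : ℕ → ℕ) : Prop where
  adj_tooth : ∀ k, ∀ e < m k, G.Adj (a k e) (a k (e + 1))
  adj_spine : ∀ k, G.Adj (a k (m k)) (a (k + 1) (m (k + 1)))
  eq_of_eq : ∀ {k l e f}, e ≤ m k → f ≤ m l → a k e = a l f → k = l ∧ e = f

section CombWalk

variable (m : ℕ → ℕ)

/-- The state `(k, t)`, `t ≤ 2 * m k`, is step `t` of the excursion from the `k`-th spine vertex
down tooth `k` and back; it is at height `Nat.dist t (m k)` on the tooth. -/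
def combStep (s : ℕ × ℕ) : ℕ × ℕ :=
  if s.2 < 2 * m s.1 then (s.1, s.2 + 1) else (s.1 + 1, 0)

def combState (i : ℕ) : ℕ × ℕ := (combStep m)^[i] (0, 0)

def combVertex (a : ℕ → ℕ → V) (s : ℕ × ℕ) : V := a s.1 (Nat.dist s.2 (m s.1))

def combWalk (a : ℕ → ℕ → V) (i : ℕ) : V := combVertex m a (combState m i)

variable {m}

lemma combState_succ (i : ℕ) : combState m (i + 1) = combStep m (combState m i) :=
  iterate_succ_apply' _ _ _

lemma combState_snd_le (i : ℕ) : (combState m i).2 ≤ 2 * m (combState m i).1 := by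
  induction i with
  | zero => simp [combState]
  | succ i ih =>
    rw [combState_succ, combStep]
    split_ifs with h
    · exact h
    · exact Nat.zero_le _

lemma dist_combState_le (i : ℕ) :
    Nat.dist (combState m i).2 (m (combState m i).1) ≤ m (combState m i).1 := by
  have := combState_snd_le (m := m) i
  unfold Nat.dist
  omega

lemma combState_injective : Injective (combState m) := by
  have hmono : StrictMono (toLex ∘ combState m) := strictMono_nat_of_lt_succ fun i => by
    simp only [comp_apply, combState_succ, combStep]
    split_ifs <;> simp [Prod.Lex.toLex_lt_toLex]
  exact hmono.injective.of_comp

lemma combState_add {i k : ℕ} (h : combState m i = (k, 0)) {t : ℕ} (ht : t ≤ 2 * m k) :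
    combState m (i + t) = (k, t) := by
  induction t with
  | zero => exact h
  | succ t ih =>
    rw [← add_assoc, combState_succ, ih (by omega), combStep]
    exact if_pos (show t < 2 * m k by omega)

lemma exists_combState_eq (k : ℕ) : ∃ i, combState m i = (k, 0) := by
  induction k with
  | zero => exact ⟨0, rfl⟩
  | succ k ih =>
    obtain ⟨i, hi⟩ := ih
    refine ⟨i + 2 * m k + 1, ?_⟩
    rw [combState_succ, combState_add hi le_rfl, combStep, if_neg (lt_irrefl _)]

lemma exists_combWalk_eq_tip (a : ℕ → ℕ → V) (k : ℕ) : ∃ i, combWalk m a i = a k 0 := by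
  obtain ⟨i, hi⟩ := exists_combState_eq (m := m) k
  refine ⟨i + m k, ?_⟩
  rw [combWalk, combState_add hi (by omega), combVertex, Nat.dist_self]

end CombWalk

namespace IsComb

variable {G : SimpleGraph V} {a : ℕ → ℕ → V} {m : ℕ → ℕ}

lemma adj_combWalk (hc : G.IsComb a m) (i : ℕ) :
    G.Adj (combWalk m a i) (combWalk m a (i + 1)) := by
  have hle := combState_snd_le (m := m) i
  simp only [combWalk, combVertex, combState_succ, combStep]
  generalize combState m i = s at hle ⊢
  obtain ⟨k, t⟩ := s
  dsimp only at hle ⊢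
  unfold Nat.dist
  split_ifs with ht
  · rcases lt_or_ge t (m k) with htm | htm
    · have := (hc.adj_tooth k (m k - t - 1) (by omega)).symm
      rwa [show m k - t - 1 + 1 = t - m k + (m k - t) by omega,
        show m k - t - 1 = t + 1 - m k + (m k - (t + 1)) by omega] at this
    · have := hc.adj_tooth k (t - m k) (by omega)
      rwa [show t - m k + 1 = t + 1 - m k + (m k - (t + 1)) by omega,
        show t - m k = t - m k + (m k - t) by omega] at this
  · have := hc.adj_spine k
    rwa [show m k = t - m k + (m k - t) by omega, show m (k + 1) = 0 - m (k + 1) + (m (k + 1) - 0)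
      by omega] at this

lemma eq_or_eq_of_combVertex_eq (hc : G.IsComb a m) {s s' : ℕ × ℕ} (hs : s.2 ≤ 2 * m s.1)
    (hs' : s'.2 ≤ 2 * m s'.1) (h : combVertex m a s' = combVertex m a s) :
    s' = (s.1, m s.1 - Nat.dist s.2 (m s.1)) ∨ s' = (s.1, m s.1 + Nat.dist s.2 (m s.1)) := by
  obtain ⟨k, t⟩ := s
  obtain ⟨k', t'⟩ := s'
  unfold combVertex Nat.dist at h
  dsimp only at hs hs' h ⊢
  unfold Nat.dist
  obtain ⟨rfl, he⟩ := hc.eq_of_eq (by omega) (by omega) h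
  simp only [Prod.mk.injEq, true_and]
  omega

lemma exists_finset_combWalk_eq (hc : G.IsComb a m) (u : V) :
    ∃ s : Finset ℕ, s.card ≤ 2 ∧ ∀ i, combWalk m a i = u → i ∈ s := by
  classical
  by_cases hu : ∃ i, combWalk m a i = u
  swap
  · exact ⟨∅, by simp, fun i hi => (hu ⟨i, hi⟩).elim⟩
  obtain ⟨i₀, rfl⟩ := hu
  set s₀ := combState m i₀
  refine ⟨Finset.preimage {(s₀.1, m s₀.1 - Nat.dist s₀.2 (m s₀.1)),
    (s₀.1, m s₀.1 + Nat.dist s₀.2 (m s₀.1))} (combState m) combState_injective.injOn, ?_,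
    fun i hi => ?_⟩
  · rw [Finset.card_preimage]
    exact (Finset.card_filter_le _ _).trans Finset.card_le_two
  · rw [Finset.mem_preimage, Finset.mem_insert, Finset.mem_singleton]
    exact hc.eq_or_eq_of_combVertex_eq (combState_snd_le i₀) (combState_snd_le i) hi

end IsComb

lemma Connected.exists_isComb_tips_mem_infinite {G : SimpleGraph V} (hconn : G.Connected)
    (hlf : ∀ v : V, Set.Finite {u | G.Adj v u}) {X : Set V} (hX : X.Infinite) :
    ∃ a m, G.IsComb a m ∧ {k | a k 0 ∈ X}.Infinite := by
  classical
  obtain ⟨r⟩ : Nonempty V := ⟨hX.nonempty.some⟩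
  obtain ⟨y, hy, hinf⟩ := hconn.exists_isBfsRay (r := r) hlf hX
  set piece := fun k => G.bfsSubtree r (y k) \ G.bfsSubtree r (y (k + 1))
  -- the tip of tooth `k`; the tooth is trivial when the piece misses `X`
  set x := fun k => if h : (X ∩ piece k).Nonempty then h.some else y k
  have hx (k : ℕ) : x k ∈ piece k := by
    by_cases h : (X ∩ piece k).Nonempty
    · simpa [x, h] using h.some_mem.2
    · simpa [x, h, piece] using ⟨mem_bfsSubtree_self _, hy.not_mem_bfsSubtree_succ hconn k⟩
  have hdist (k : ℕ) := hconn.dist_le_of_mem_bfsSubtree (hx k).1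
  refine ⟨fun k e => (G.bfsParent r)^[e] (x k), fun k => G.dist r (x k) - G.dist r (y k),
    ⟨fun k e he => ?_, fun k => ?_, fun {k l e f} he hf h => ?_⟩, ?_⟩
  · rw [iterate_succ_apply']
    refine (hconn.adj_bfsParent fun h => ?_).symm
    have := hconn.dist_iterate_bfsParent (r := r) (x k) e
    rw [h, dist_self] at this
    have := hdist k
    omega
  · simp only [hconn.iterate_bfsParent_dist_sub (hx _).1]
    exact hy.adj hconn k
  · obtain rfl : k = l := by
      by_contra hkl
      exact Set.disjoint_left.mp (hy.disjoint_diff hkl)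
        (hconn.iterate_bfsParent_mem_diff (hx k) he)
        (h ▸ hconn.iterate_bfsParent_mem_diff (hx l) hf)
    have := congrArg (G.dist r) h
    simp only [hconn.dist_iterate_bfsParent] at this
    have := hdist k
    omega
  · refine Set.infinite_of_forall_exists_gt fun K => ?_
    obtain ⟨w, hwX, hw⟩ := (hinf (K + 1)).nonempty
    obtain ⟨k, hk, hwk⟩ := hy.exists_mem_diff hconn hw
    have h : (X ∩ piece k).Nonempty := ⟨w, hwX, hwk⟩
    exact ⟨k, by simpa [x, h] using h.some_mem.1, by omega⟩

end SimpleGraph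

theorem stmt16_general {V : Type*} (G : SimpleGraph V) (hconn : G.Connected)
    (hlf : ∀ v : V, Set.Finite {u | G.Adj v u})
    (X : Set V) (hX : X.Infinite) :
    ∃ v : ℕ → V,
      (∀ i, G.Adj (v i) (v (i + 1))) ∧
      (∀ u : V, ∃ s : Finset ℕ, s.card ≤ 2 ∧ ∀ i, v i = u → i ∈ s) ∧
      Set.Infinite {x ∈ X | ∃ i, v i = x} := by
  obtain ⟨a, m, hc, hX'⟩ := hconn.exists_isComb_tips_mem_infinite hlf hX
  refine ⟨SimpleGraph.combWalk m a, hc.adj_combWalk, hc.exists_finset_combWalk_eq, ?_⟩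
  have htip : Set.InjOn (a · 0) {k | a k 0 ∈ X} := fun k _ l _ h =>
    (hc.eq_of_eq (Nat.zero_le _) (Nat.zero_le _) h).1
  refine (hX'.image htip).mono ?_
  rintro _ ⟨k, hk, rfl⟩
  exact ⟨hk, SimpleGraph.exists_combWalk_eq_tip a k⟩

theorem stmt16 {V : Type*} [Infinite V] (G : SimpleGraph V) (hconn : G.Connected)
    (hlf : ∀ v : V, Set.Finite {u | G.Adj v u})
    (X : Set V) (hX : X.Infinite) :
    ∃ v : ℕ → V,
      (∀ i, G.Adj (v i) (v (i + 1))) ∧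
      (∀ u : V, ∃ s : Finset ℕ, s.card ≤ 2 ∧ ∀ i, v i = u → i ∈ s) ∧
      Set.Infinite {x ∈ X | ∃ i, v i = x} :=
  stmt16_general G hconn hlf X hX
end
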